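/- arXiv:1402.2222 — 7 statements merged into one kernel-verified Lean document; each statement's English description precedes it below -/
import Mathlib

section
/- If R is a split nilpotent extension of a commutative ring S (i.e., there is a split surjection R → S with nilpotent kernel I) and S is m-fold stable, then R is m-fold stable. -/
/-- A commutative ring `T` is `m`-fold stable if for every family of `m` unimodular
pairs `(a j, b j)` there is a single `t` making every `a j + b j * t` a unit. -/
def MFoldStable (T : Type*) [CommRing T] (m : ℕ) : Prop :=
  ∀ a b : Fin m → T, (∀ j, Ideal.span {a j, b j} = ⊤) →
    ∃ t : T, ∀ j, IsUnit (a j + b j * t)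

/-- If `R` is a split nilpotent extension of `S` (split surjection `f : R → S` with
section `g` and nilpotent kernel) and `S` is `m`-fold stable, then `R` is `m`-fold stable. -/
theorem stmt_2 {R S : Type*} [CommRing R] [CommRing S] (f : R →+* S) (g : S →+* R)
    (hf : Function.Surjective f) (hsplit : f.comp g = RingHom.id S)
    (N : ℕ) (hN : 1 ≤ N) (hnil : (RingHom.ker f) ^ N = ⊥)
    (m : ℕ) (hS : MFoldStable S m) : MFoldStable R m := by
  intro a b hab
  have hspan : ∀ j, Ideal.span {f (a j), f (b j)} = ⊤ := by
    intro j
    rw [Ideal.eq_top_iff_one]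
    have h1 : (1 : S) ∈ Ideal.map f (Ideal.span {a j, b j}) := by
      have : (1 : R) ∈ Ideal.span {a j, b j} := by rw [hab j]; trivial
      simpa using Ideal.mem_map_of_mem f this
    rwa [Ideal.map_span, Set.image_insert_eq, Set.image_singleton] at h1
  obtain ⟨s, hs⟩ := hS _ _ hspan
  refine ⟨g s, fun j => ?_⟩
  set x := a j + b j * g s with hx
  have hfg : f (g s) = s := RingHom.congr_fun hsplit s
  have hu : IsUnit (f x) := by
    simpa [hx, map_add, map_mul, hfg] using hs j
  obtain ⟨y, hy⟩ := hu.exists_right_inv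
  have hfgy : f (g y) = y := RingHom.congr_fun hsplit y
  have hker : x * g y - 1 ∈ RingHom.ker f := by
    simp only [RingHom.mem_ker, hfgy, map_sub, map_mul, map_one, hy, sub_self]
  have hnpow : (x * g y - 1) ^ N = 0 := by
    have := Ideal.pow_mem_pow hker N
    rw [hnil] at this
    simpa using this
  have hnilp : IsNilpotent (x * g y - 1) := ⟨N, hnpow⟩
  have hunit : IsUnit (x * g y) := by
    have := IsNilpotent.isUnit_add_right_of_commute hnilp isUnit_one (Commute.all _ _)
    simpa using this
  exact isUnit_of_mul_isUnit_left hunit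
end

section
/- If S is a 2-fold stable commutative ring in which 2 is invertible, then every element of S is the sum of two units. -/
/-- If `S` is a `2`-fold stable commutative ring in which `2` is invertible, then every
element of `S` is the sum of two units. -/
theorem stmt_3 {S : Type*} [CommRing S] (hS : MFoldStable S 2) (h2 : IsUnit (2 : S)) :
    ∀ s : S, ∃ u v : Sˣ, s = (u : S) + (v : S) := by
  intro s
  obtain ⟨t, ht⟩ := hS ![s, 0] ![-1, 1] (by
    intro j
    fin_cases j <;> simp only [Matrix.cons_val_zero, Matrix.cons_val_one, Matrix.head_cons] <;>
      refine Ideal.eq_top_iff_one _ |>.2 ?_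
    · have : (-1 : S) ∈ ({s, -1} : Set S) := by simp
      have h := Ideal.subset_span this
      simpa using neg_mem h
    · exact Ideal.subset_span (by simp))
  have h0 := ht 0
  have h1 := ht 1
  simp only [Matrix.cons_val_zero, Matrix.cons_val_one, Matrix.head_cons] at h0 h1
  rw [zero_add, one_mul] at h1
  obtain ⟨u, hu⟩ := h0
  obtain ⟨v, hv⟩ := h1
  exact ⟨u, v, by rw [hu, hv]; ring⟩
end

section
/- If R is a split nilpotent extension of a commutative ring S in which 2 is invertible and S is 2-fold stable, then every element of R is a sum of two units of R. -/
/-- If `R` is a split nilpotent extension of a `2`-fold stable commutative ring `S`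
in which `2` is invertible, then every element of `R` is a sum of two units of `R`. -/
theorem stmt_4 {R S : Type*} [CommRing R] [CommRing S] (f : R →+* S) (g : S →+* R)
    (hf : Function.Surjective f) (hsplit : f.comp g = RingHom.id S)
    (N : ℕ) (hN : 1 ≤ N) (hnil : (RingHom.ker f) ^ N = ⊥)
    (hS : MFoldStable S 2) (h2 : IsUnit (2 : S)) :
    ∀ r : R, ∃ u v : Rˣ, r = (u : R) + (v : R) := by
  intro r
  -- every element of ker f is nilpotent
  have hker_nil : ∀ x ∈ RingHom.ker f, IsNilpotent x := by
    intro x hx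
    exact ⟨N, by
      have := Ideal.pow_mem_pow hx N
      rw [hnil] at this
      simpa using this⟩
  -- f (g s) = s
  have hfg : ∀ s : S, f (g s) = s := fun s => RingHom.congr_fun hsplit s
  -- in S, write f r as a sum of two units
  set c : S := ↑h2.unit⁻¹ * f r with hc
  obtain ⟨t, ht⟩ := hS ![c, c] ![1, -1] (by
    intro j
    fin_cases j <;> simp only [Matrix.cons_val_zero, Matrix.cons_val_one, Matrix.head_cons] <;>
      [exact Ideal.eq_top_of_isUnit_mem _ (Ideal.subset_span (by simp)) isUnit_one;
       exact Ideal.eq_top_of_isUnit_mem _ (Ideal.subset_span (by simp)) (IsUnit.neg isUnit_one)])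
  have hu : IsUnit (c + t) := by simpa using ht 0
  have hv : IsUnit (c - t) := by simpa [sub_eq_add_neg] using ht 1
  have hsum : (c + t) + (c - t) = f r := by
    have : c + c = f r := by
      rw [hc]
      have : (2 : S) * (↑h2.unit⁻¹ * f r) = f r := by
        rw [← mul_assoc, IsUnit.mul_val_inv, one_mul]
      linear_combination this
    linear_combination this
  -- lift units through g, then adjust by nilpotent error
  have hgu : IsUnit (g (c + t)) := hu.map g
  have hgv : IsUnit (g (c - t)) := hv.map g
  have hn : r - g (c + t) - g (c - t) ∈ RingHom.ker f := by
    simp only [RingHom.mem_ker, map_sub, hfg]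
    linear_combination -hsum
  have hU : IsUnit (g (c + t) + (r - g (c + t) - g (c - t))) :=
    (hker_nil _ hn).isUnit_add_left_of_commute hgu (Commute.all _ _)
  obtain ⟨u, hu'⟩ := hU
  obtain ⟨v, hv'⟩ := hgv
  exact ⟨u, v, by rw [hu', hv']; ring⟩
end

section
/- In a semilocal commutative ring S, S is m-fold stable if and only if every residue field of S (quotient by a maximal ideal) contains at least m+1 elements. -/
/-- In a field with at least `m+1` elements, one can avoid `m` affine conditions. -/
lemma field_avoid {K : Type*} [Field K] (m : ℕ) (aa bb : Fin m → K)
    (h : ∀ j, aa j ≠ 0 ∨ bb j ≠ 0)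
    (φ : Fin (m + 1) → K) (hφ : Function.Injective φ) :
    ∃ x : K, ∀ j, aa j + bb j * x ≠ 0 := by
  classical
  set bad : Fin m → K := fun j => -aa j / bb j with hbad
  have hcard : (Finset.image bad Finset.univ).card < (Finset.image φ Finset.univ).card := by
    have h1 : (Finset.image bad Finset.univ).card ≤ m := by
      simpa using Finset.card_image_le (f := bad) (s := Finset.univ)
    have h2 : (Finset.image φ Finset.univ).card = m + 1 := by
      rw [Finset.card_image_of_injective _ hφ]; simp
    omega
  have hns : ¬ Finset.image φ Finset.univ ⊆ Finset.image bad Finset.univ :=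
    fun hsub => absurd (Finset.card_le_card hsub) (not_le.mpr hcard)
  obtain ⟨y, hy1, hy2⟩ := Finset.not_subset.mp hns
  refine ⟨y, fun j hj => ?_⟩
  by_cases hb : bb j = 0
  · rcases h j with ha | hb'
    · rw [hb, zero_mul, add_zero] at hj; exact ha hj
    · exact hb' hb
  · apply hy2
    have : y = bad j := by
      rw [hbad]; field_simp
      linear_combination hj
    rw [this]
    exact Finset.mem_image_of_mem bad (Finset.mem_univ j)

/-- A semilocal commutative ring (finitely many maximal ideals) is `m`-fold stable if and
only if every residue field `S ⧸ M` (for `M` maximal) has at least `m + 1` elements. -/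
theorem stmt_5 {S : Type*} [CommRing S]
    (hsemi : {M : Ideal S | M.IsMaximal}.Finite) (m : ℕ) :
    MFoldStable S m ↔
      ∀ M : Ideal S, M.IsMaximal →
        ∃ φ : Fin (m + 1) → S ⧸ M, Function.Injective φ := by
  classical
  constructor
  · -- m-fold stable → big residue fields
    intro hst M hM
    by_contra hno
    push_neg at hno
    haveI := hM
    -- S ⧸ M is finite with at most m elements
    haveI : Finite (S ⧸ M) := by
      by_contra hfin
      rw [not_finite_iff_infinite] at hfin
      exact hno (fun k => Infinite.natEmbedding (S ⧸ M) k)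
        ((Infinite.natEmbedding (S ⧸ M)).injective.comp
          (fun _ _ h => Fin.ext (by exact_mod_cast h)))
    haveI : Fintype (S ⧸ M) := Fintype.ofFinite _
    have hq : Fintype.card (S ⧸ M) ≤ m := by
      by_contra hc
      push_neg at hc
      obtain ⟨f⟩ := Function.Embedding.nonempty_of_card_le
        (α := Fin (m + 1)) (β := S ⧸ M) (by simp; omega)
      exact hno f f.injective
    set q := Fintype.card (S ⧸ M) with hqdef
    let e : S ⧸ M ≃ Fin q := Fintype.equivFin (S ⧸ M)
    -- representatives
    have hr : ∀ i : Fin q, ∃ s : S, Ideal.Quotient.mk M s = e.symm i := fun i =>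
      Ideal.Quotient.mk_surjective (e.symm i)
    choose r hrspec using hr
    set a : Fin m → S := fun j => if h : (j : ℕ) < q then r ⟨j, h⟩ else 0 with ha
    obtain ⟨t, ht⟩ := hst a (fun _ => 1) (fun j => by
      apply Ideal.eq_top_of_isUnit_mem _ (Ideal.subset_span (by simp)) isUnit_one)
    -- find the representative of -t
    set i : Fin q := e (Ideal.Quotient.mk M (-t)) with hi
    have him : (i : ℕ) < m := lt_of_lt_of_le i.2 hq
    have hmem : a ⟨i, him⟩ + 1 * t ∈ M := by
      rw [← Ideal.Quotient.eq_zero_iff_mem]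
      have : a ⟨i, him⟩ = r i := by simp [ha, i.2]
      rw [this, map_add, map_mul, hrspec, hi, Equiv.symm_apply_apply, map_one, one_mul,
        map_neg]
      ring
    exact hM.ne_top (Ideal.eq_top_of_isUnit_mem _ hmem (ht ⟨i, him⟩))
  · -- big residue fields → m-fold stable
    intro hbig a b hab
    haveI : Finite {M : Ideal S // M.IsMaximal} := hsemi.to_subtype
    haveI : Fintype {M : Ideal S // M.IsMaximal} := Fintype.ofFinite _
    set I : {M : Ideal S // M.IsMaximal} → Ideal S := fun i => i.1 with hI
    have hcop : Pairwise (Function.onFun IsCoprime I) := by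
      intro i j hij
      rw [Function.onFun, Ideal.isCoprime_iff_sup_eq]
      exact Ideal.IsMaximal.coprime_of_ne i.2 j.2 (fun h => hij (Subtype.ext h))
    -- choose a good residue for each maximal ideal
    have hx : ∀ i : {M : Ideal S // M.IsMaximal},
        ∃ x : S ⧸ I i, ∀ j, Ideal.Quotient.mk (I i) (a j) +
          Ideal.Quotient.mk (I i) (b j) * x ≠ 0 := by
      intro i
      haveI : (I i).IsMaximal := i.2
      letI : Field (S ⧸ I i) := Ideal.Quotient.field (I i)
      obtain ⟨φ, hφ⟩ := hbig (I i) i.2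
      refine field_avoid m _ _ ?_ φ hφ
      intro j
      by_contra hcon
      push_neg at hcon
      obtain ⟨h1, h2⟩ := hcon
      rw [Ideal.Quotient.eq_zero_iff_mem] at h1 h2
      refine i.2.ne_top (top_le_iff.mp ?_)
      rw [← hab j]
      apply Ideal.span_le.mpr
      intro z hz
      simp only [Set.mem_insert_iff, Set.mem_singleton_iff] at hz
      rcases hz with rfl | rfl
      · exact h1
      · exact h2
    choose x hxspec using hx
    -- CRT: lift the residues simultaneously
    obtain ⟨y, hy⟩ := Ideal.quotientInfToPiQuotient_surj hcop x
    obtain ⟨t, rfl⟩ := Ideal.Quotient.mk_surjective y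
    have hyt : ∀ i, Ideal.Quotient.mk (I i) t = x i := by
      intro i
      have := congrFun hy i
      rwa [Ideal.quotientInfToPiQuotient_mk'] at this
    refine ⟨t, fun j => ?_⟩
    by_contra hu
    obtain ⟨M, hM, hmem⟩ := exists_max_ideal_of_mem_nonunits (mem_nonunits_iff.mpr hu)
    have := hxspec ⟨M, hM⟩ j
    rw [← hyt ⟨M, hM⟩, ← map_mul, ← map_add, Ne, Ideal.Quotient.eq_zero_iff_mem] at this
    exact this hmem
end

section
/- Let R be a split nilpotent extension of S with extension ideal I. Then the relative Milnor K-group K^M_{n+1}(R, I) := Ker(K^M_{n+1}(R) → K^M_{n+1}(S)) is generated by Steinberg symbols {r_0,...,r_n} having at least one entry in the subgroup (1+I)* of R*. -/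
/-- The Steinberg relation on the tensor algebra over `ℤ` of the unit group of `R`. -/
inductive SteinbergRel (R : Type*) [CommRing R] :
    TensorAlgebra ℤ (Additive Rˣ) → TensorAlgebra ℤ (Additive Rˣ) → Prop
  | mk (r s : Rˣ) (h : (r : R) + (s : R) = 1) :
      SteinbergRel R
        (TensorAlgebra.ι ℤ (Additive.ofMul r) * TensorAlgebra.ι ℤ (Additive.ofMul s)) 0

/-- The (naive) Milnor `K`-ring of `R`. -/
abbrev MilnorK (R : Type*) [CommRing R] := RingQuot (SteinbergRel R)

/-- The class of a unit `r` in the Milnor `K`-ring. -/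
noncomputable def milnorGen {R : Type*} [CommRing R] (r : Rˣ) : MilnorK R :=
  RingQuot.mkRingHom (SteinbergRel R) (TensorAlgebra.ι ℤ (Additive.ofMul r))

/-- The Steinberg symbol `{r_1, ..., r_n}`. -/
noncomputable def milnorSymbol {R : Type*} [CommRing R] (rs : List Rˣ) : MilnorK R :=
  (rs.map milnorGen).prod

lemma milnorGen_mul {R : Type*} [CommRing R] (r s : Rˣ) :
    milnorGen (r * s) = milnorGen r + milnorGen s := by
  unfold milnorGen
  rw [show Additive.ofMul (r * s) = Additive.ofMul r + Additive.ofMul s from rfl,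
    map_add, map_add]

lemma milnorGen_one {R : Type*} [CommRing R] : milnorGen (1 : Rˣ) = 0 := by
  unfold milnorGen
  rw [show Additive.ofMul (1 : Rˣ) = 0 from rfl, map_zero, map_zero]

lemma milnor_steinberg {R : Type*} [CommRing R] (r s : Rˣ) (h : (r : R) + (s : R) = 1) :
    milnorGen r * milnorGen s = 0 := by
  unfold milnorGen
  rw [← map_mul, RingQuot.mkRingHom_rel (SteinbergRel.mk r s h), map_zero]

/-- The additive hom sending a unit to its Milnor generator. -/
noncomputable def milnorGenHom (R : Type*) [CommRing R] : Additive Rˣ →+ MilnorK R :=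
  ((RingQuot.mkRingHom (SteinbergRel R)).toAddMonoidHom.comp
    (TensorAlgebra.ι ℤ (M := Additive Rˣ)).toAddMonoidHom)

/-- Functoriality of the Milnor `K`-ring. -/
noncomputable def milnorMap {A B : Type*} [CommRing A] [CommRing B] (φ : A →+* B) :
    MilnorK A →+* MilnorK B :=
  RingQuot.lift
    ⟨((TensorAlgebra.lift ℤ
        (((milnorGenHom B).comp
          (MonoidHom.toAdditive (Units.map (φ : A →* B)))).toIntLinearMap)) :
        TensorAlgebra ℤ (Additive Aˣ) →ₐ[ℤ] MilnorK B).toRingHom, by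
      rintro x y ⟨r, s, h⟩
      simp only [AlgHom.toRingHom_eq_coe, RingHom.coe_coe, map_mul, map_zero,
        TensorAlgebra.lift_ι_apply]
      exact (congrArg₂ (· * ·) (TensorAlgebra.lift_ι_apply _ _) (TensorAlgebra.lift_ι_apply _ _)).trans
        (milnor_steinberg (Units.map (φ : A →* B) r) (Units.map (φ : A →* B) s) (by
        simpa [map_add] using congrArg φ h))⟩

lemma milnorMap_gen {A B : Type*} [CommRing A] [CommRing B] (φ : A →+* B) (r : Aˣ) :
    milnorMap φ (milnorGen r) = milnorGen (Units.map (φ : A →* B) r) := by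
  unfold milnorMap milnorGen
  rw [RingQuot.lift_mkRingHom_apply]
  simp [TensorAlgebra.lift_ι_apply, milnorGenHom]
  exact TensorAlgebra.lift_ι_apply _ _

lemma milnorMap_symbol {A B : Type*} [CommRing A] [CommRing B] (φ : A →+* B) (rs : List Aˣ) :
    milnorMap φ (milnorSymbol rs) = milnorSymbol (rs.map (Units.map (φ : A →* B))) := by
  unfold milnorSymbol
  rw [← List.prod_hom _ (milnorMap φ), List.map_map, List.map_map]
  congr 1
  simp [Function.comp_def, milnorMap_gen]

/-- Multiplying the "good" closure by a generator stays in the good closure. -/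
lemma mul_mem_good {R S : Type*} [CommRing R] [CommRing S] (f : R →+* S) (m : ℕ) (s : Rˣ)
    (x : MilnorK R)
    (hx : x ∈ AddSubgroup.closure {y | ∃ rs : List Rˣ, rs.length = m ∧
        (∃ r ∈ rs, (r : R) - 1 ∈ RingHom.ker f) ∧ y = milnorSymbol rs}) :
    milnorGen s * x ∈ AddSubgroup.closure {y | ∃ rs : List Rˣ, rs.length = m + 1 ∧
        (∃ r ∈ rs, (r : R) - 1 ∈ RingHom.ker f) ∧ y = milnorSymbol rs} := by
  induction hx using AddSubgroup.closure_induction with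
  | mem y hy =>
    obtain ⟨rs, hlen, ⟨r, hr, hker⟩, rfl⟩ := hy
    refine AddSubgroup.subset_closure ⟨s :: rs, by simp [hlen], ⟨r, by simp [hr], hker⟩, ?_⟩
    simp [milnorSymbol]
  | zero => simpa using AddSubgroup.zero_mem _
  | add a b _ _ ha hb => rw [mul_add]; exact AddSubgroup.add_mem _ ha hb
  | neg a _ ha =>
    have h2 : milnorGen s * -a = -(milnorGen s * a) :=
      eq_neg_of_add_eq_zero_left (by rw [← mul_add]; simp)
    rw [h2]; exact AddSubgroup.neg_mem _ ha

lemma symbol_sub_mem {R S : Type*} [CommRing R] [CommRing S] (f : R →+* S) (σ : Rˣ →* Rˣ)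
    (hσ : ∀ r : Rˣ, (((σ r)⁻¹ * r : Rˣ) : R) - 1 ∈ RingHom.ker f) (rs : List Rˣ) :
    milnorSymbol rs - milnorSymbol (rs.map σ) ∈
      AddSubgroup.closure {y | ∃ rs' : List Rˣ, rs'.length = rs.length ∧
        (∃ r ∈ rs', (r : R) - 1 ∈ RingHom.ker f) ∧ y = milnorSymbol rs'} := by
  induction rs with
  | nil => simpa [milnorSymbol] using AddSubgroup.zero_mem _
  | cons r l ih =>
    set u : Rˣ := (σ r)⁻¹ * r with hu
    have hr : milnorGen r = milnorGen (σ r) + milnorGen u := by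
      rw [← milnorGen_mul]
      congr 1
      rw [hu, ← mul_assoc, mul_inv_cancel, one_mul]
    have key : milnorSymbol (r :: l) - milnorSymbol ((r :: l).map σ)
        = milnorGen u * milnorSymbol l
          + milnorGen (σ r) * (milnorSymbol l - milnorSymbol (l.map σ)) := by
      simp only [milnorSymbol, List.map_cons, List.prod_cons]
      rw [hr, add_mul, mul_sub]
      abel
    rw [key]
    refine AddSubgroup.add_mem _ ?_ ?_
    · refine AddSubgroup.subset_closure ⟨u :: l, by simp, ⟨u, by simp, hσ r⟩, ?_⟩
      simp [milnorSymbol]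
    · simpa using mul_mem_good f l.length (σ r) _ ih

/-- Let `R` be a split nilpotent extension of `S` with extension ideal `I = ker f`, and
let `F : K^M_•(R) → K^M_•(S)` be the induced map on Milnor `K`-theory (sending a Steinberg
symbol to the symbol of the images of its entries).  Then every element of the degree
`n + 1` part of `K^M_•(R)` lying in the kernel of `F` — i.e. every element of the relative
Milnor `K`-group `K^M_{n+1}(R, I)` — lies in the subgroup generated by Steinberg symbols
of length `n + 1` having at least one entry in the subgroup `(1 + I)*` of `Rˣ`. -/
theorem stmt_12 {R S : Type*} [CommRing R] [CommRing S] (f : R →+* S) (g : S →+* R)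
    (hf : Function.Surjective f) (hsplit : f.comp g = RingHom.id S)
    (N : ℕ) (hN : 1 ≤ N) (hnil : (RingHom.ker f) ^ N = ⊥)
    (F : MilnorK R →+* MilnorK S)
    (hF : ∀ rs : List Rˣ, F (milnorSymbol rs) = milnorSymbol (rs.map (Units.map (f : R →* S))))
    (n : ℕ) :
    ∀ x : MilnorK R,
      x ∈ AddSubgroup.closure {y | ∃ rs : List Rˣ, rs.length = n + 1 ∧ y = milnorSymbol rs} →
      F x = 0 →
      x ∈ AddSubgroup.closure {y | ∃ rs : List Rˣ, rs.length = n + 1 ∧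
            (∃ r ∈ rs, (r : R) - 1 ∈ RingHom.ker f) ∧ y = milnorSymbol rs} := by
  intro x hx hFx
  set σ : Rˣ →* Rˣ := Units.map ((g.comp f : R →+* R) : R →* R) with hσdef
  have hfg : ∀ s : S, f (g s) = s := fun s => congrArg (· s) (congrArg (·.toFun) hsplit)
  have hσ : ∀ r : Rˣ, (((σ r)⁻¹ * r : Rˣ) : R) - 1 ∈ RingHom.ker f := by
    intro r
    have : Units.map (f : R →* S) ((σ r)⁻¹ * r) = 1 := by
      ext
      simp [hσdef, hfg]
      rw [← map_mul]
      simp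
    rw [RingHom.mem_ker, map_sub, map_one, show f (((σ r)⁻¹ * r : Rˣ) : R)
      = ((Units.map (f : R →* S) ((σ r)⁻¹ * r) : Sˣ) : S) from rfl, this]
    simp
  set G : MilnorK S →+* MilnorK R := milnorMap g with hG
  have hGF : ∀ rs : List Rˣ, G (F (milnorSymbol rs)) = milnorSymbol (rs.map σ) := by
    intro rs
    rw [hF, milnorMap_symbol, List.map_map]
    congr 1
  -- the element `x - G (F x)` lies in the good closure
  have main : x - G (F x) ∈ AddSubgroup.closure {y | ∃ rs : List Rˣ, rs.length = n + 1 ∧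
      (∃ r ∈ rs, (r : R) - 1 ∈ RingHom.ker f) ∧ y = milnorSymbol rs} := by
    clear hFx
    induction hx using AddSubgroup.closure_induction with
    | mem y hy =>
      obtain ⟨rs, hlen, rfl⟩ := hy
      rw [hGF]
      simpa [hlen] using symbol_sub_mem f σ hσ rs
    | zero => simpa using AddSubgroup.zero_mem _
    | add a b _ _ ha hb =>
      have : a + b - G (F (a + b)) = (a - G (F a)) + (b - G (F b)) := by
        rw [map_add, map_add]; abel
      rw [this]; exact AddSubgroup.add_mem _ ha hb
    | neg a _ ha =>
      have : -a - G (F (-a)) = -(a - G (F a)) := by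
        rw [map_neg, map_neg]; abel
      rw [this]; exact AddSubgroup.neg_mem _ ha
  rwa [hFx, map_zero, sub_zero] at main
end

section
/- Let R be a split nilpotent extension of a 2-fold stable ring S with extension ideal I, with 2 invertible in S. Then the group Ω^n_{R,I} := Ker(Ω^n_{R/Z} → Ω^n_{S/Z}) is generated by differentials of the form r · d r_1 ∧ ... ∧ d r_m ∧ d r'_1 ∧ ... ∧ d r'_{n−m} where r is either 1 or lies in I, each r_j ∈ I, and each r'_j ∈ R*. -/
/-- The element `c · dr_1 ∧ ⋯ ∧ dr_n` of the exterior algebra `Ω^•_{R/ℤ}` of absolute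
Kähler differentials, where `rs = [r_1, ..., r_n]`. -/
noncomputable def wedgeD (R : Type*) [CommRing R] (c : R) (rs : List R) :
    ExteriorAlgebra R (KaehlerDifferential ℤ R) :=
  c • ((rs.map fun r => ExteriorAlgebra.ι R (KaehlerDifferential.D ℤ R r)).prod)

/-- The degree-`n` part `Ω^n_{R/ℤ}` of the exterior algebra of absolute Kähler
differentials, as an additive subgroup: it is generated by the elements
`c · dr_1 ∧ ⋯ ∧ dr_n`. -/
noncomputable def omegaDeg (R : Type*) [CommRing R] (n : ℕ) :
    AddSubgroup (ExteriorAlgebra R (KaehlerDifferential ℤ R)) :=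
  AddSubgroup.closure {y | ∃ (c : R) (rs : List R), rs.length = n ∧ y = wedgeD R c rs}

section AuxWedge
open ExteriorAlgebra KaehlerDifferential

variable {R : Type*} [CommRing R]

lemma wedgeDAux.anticomm {M : Type*} [AddCommGroup M] [Module R M] (x y : M) :
    ι R x * ι R y = -(ι R y * ι R x) :=
  eq_neg_of_add_eq_zero_left (ExteriorAlgebra.ι_add_mul_swap x y)

lemma wedgeDAux.ι_mul_listprod {M : Type*} [AddCommGroup M] [Module R M] (x : M) (l : List M) :
    ι R x * (l.map (ι R)).prod = ((-1:ℤ)^l.length) • ((l.map (ι R)).prod * ι R x) := by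
  induction l with
  | nil => simp
  | cons y l ih =>
    rw [List.map_cons, List.prod_cons, List.length_cons, ← mul_assoc, wedgeDAux.anticomm x y,
      neg_mul, mul_assoc, ih, mul_smul_comm, pow_succ, mul_smul]
    simp [mul_assoc]

lemma wedgeD_cons (c r : R) (rs : List R) :
    wedgeD R c (r :: rs) = ι R (D ℤ R r) * wedgeD R c rs := by
  simp [wedgeD, List.map_cons, List.prod_cons, mul_smul_comm]

lemma wedgeD_add_coeff (c c' : R) (rs : List R) :
    wedgeD R (c + c') rs = wedgeD R c rs + wedgeD R c' rs := by
  simp [wedgeD, add_smul]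

lemma wedgeD_move (c x : R) (as bs : List R) :
    wedgeD R c (x :: (as ++ bs)) = ((-1:ℤ)^as.length) • wedgeD R c (as ++ x :: bs) := by
  unfold wedgeD
  rw [List.map_cons, List.prod_cons, List.map_append, List.prod_append, ← mul_assoc,
    show (ι R (D ℤ R x)) * (as.map fun r => ι R (D ℤ R r)).prod
      = ((-1:ℤ)^as.length) • ((as.map fun r => ι R (D ℤ R r)).prod * ι R (D ℤ R x)) by
        simpa [List.map_map, Function.comp_def] using
          wedgeDAux.ι_mul_listprod (R := R) (D ℤ R x) (as.map (D ℤ R ·))]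
  rw [List.map_append, List.prod_append, List.map_cons, List.prod_cons]
  rw [smul_mul_assoc, mul_assoc, smul_comm]

lemma wedgeD_trick (p h : R) (l : List R) :
    wedgeD R p (h :: l) = wedgeD R 1 ((p * h) :: l) - wedgeD R h (p :: l) := by
  unfold wedgeD
  rw [List.map_cons, List.prod_cons, List.map_cons, List.prod_cons,
    List.map_cons, List.prod_cons]
  rw [← smul_mul_assoc, ← smul_mul_assoc, ← smul_mul_assoc]
  rw [← LinearMap.map_smul, ← LinearMap.map_smul, ← LinearMap.map_smul]
  rw [show (p • D ℤ R h : KaehlerDifferential ℤ R) = D ℤ R (p * h) - h • D ℤ R p by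
    rw [Derivation.leibniz]; abel]
  rw [map_sub, sub_mul, one_smul]

lemma wedgeD_cons_addD (c a b : R) (rs : List R) :
    wedgeD R c ((a + b) :: rs) = wedgeD R c (a :: rs) + wedgeD R c (b :: rs) := by
  rw [wedgeD_cons, wedgeD_cons, wedgeD_cons, map_add, map_add, add_mul]

end AuxWedge

set_option maxHeartbeats 1000000 in
open ExteriorAlgebra KaehlerDifferential in
/-- Let `R` be a split nilpotent extension of a `2`-fold stable ring `S` (with `2`
invertible in `S`) with extension ideal `I = ker f`, and let
`Φ : Ω^•_{R/ℤ} → Ω^•_{S/ℤ}` be the induced ring homomorphism (determined on generators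
by `hΦ1`, `hΦ2`).  Then every element of `Ω^n_{R/ℤ}` killed by `Φ` — i.e. every element
of `Ω^n_{R,I} = Ker(Ω^n_{R/ℤ} → Ω^n_{S/ℤ})` — lies in the subgroup generated by
differentials `c · da_1 ∧ ⋯ ∧ da_m ∧ db_1 ∧ ⋯ ∧ db_{n-m}` with `c = 1` or `c ∈ I`,
every `a_j ∈ I`, and every `b_j` a unit of `R`. -/
theorem stmt_13 {R S : Type*} [CommRing R] [CommRing S] (f : R →+* S) (g : S →+* R)
    (hf : Function.Surjective f) (hsplit : f.comp g = RingHom.id S)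
    (N : ℕ) (hN : 1 ≤ N) (hnil : (RingHom.ker f) ^ N = ⊥)
    (hstable : MFoldStable S 2) (h2 : IsUnit (2 : S))
    (Φ : ExteriorAlgebra R (KaehlerDifferential ℤ R) →+*
      ExteriorAlgebra S (KaehlerDifferential ℤ S))
    (hΦ1 : ∀ r : R, Φ (algebraMap R _ r) = algebraMap S _ (f r))
    (hΦ2 : ∀ r : R, Φ (ExteriorAlgebra.ι R (KaehlerDifferential.D ℤ R r)) =
      ExteriorAlgebra.ι S (KaehlerDifferential.D ℤ S (f r)))
    (n : ℕ) :
    ∀ x, x ∈ omegaDeg R n → Φ x = 0 →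
      x ∈ AddSubgroup.closure {y | ∃ (c : R) (as bs : List R),
            (c = 1 ∨ c ∈ RingHom.ker f) ∧ (∀ a ∈ as, a ∈ RingHom.ker f) ∧
            (∀ b ∈ bs, IsUnit b) ∧ as.length + bs.length = n ∧
            y = wedgeD R c (as ++ bs)} := by
  classical
  intro x hx hΦx
  have hfg : ∀ s : S, f (g s) = s := fun s => RingHom.congr_fun hsplit s
  -- every lift of a unit is a unit
  have liftUnit : ∀ r : R, IsUnit (f r) → IsUnit r := by
    intro r hr
    obtain ⟨w, hw⟩ := hr.exists_right_inv
    have hker : r * g w - 1 ∈ RingHom.ker f := by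
      simp [RingHom.mem_ker, map_mul, hfg, hw]
    have hnilp : IsNilpotent (r * g w - 1) := by
      refine ⟨N, ?_⟩
      have h' := Ideal.pow_mem_pow hker N
      rw [hnil] at h'
      simpa using h'
    have hu : IsUnit (r * g w) := by
      have h1 := hnilp.isUnit_add_one
      rwa [sub_add_cancel] at h1
    exact isUnit_of_mul_isUnit_left hu
  -- every element of S is a sum of two units
  have twoUnits : ∀ s : S, ∃ u v : S, IsUnit u ∧ IsUnit v ∧ s = u + v := by
    intro s
    obtain ⟨t, ht⟩ := hstable ![s, 0] ![1, 1] (by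
      intro j
      rw [Ideal.eq_top_iff_one]
      fin_cases j <;> exact Ideal.subset_span (by simp))
    refine ⟨s + t, -t, ?_, ?_, by ring⟩
    · have h0 := ht 0; simpa using h0
    · have h1 := ht 1
      simp only [Matrix.cons_val_one, Matrix.head_cons, Matrix.cons_val_zero, zero_add,
        one_mul] at h1
      exact h1.neg
  have decomp : ∀ r : R, ∃ (i : R) (u' v' : S), i ∈ RingHom.ker f ∧ IsUnit u' ∧ IsUnit v' ∧
      r = i + (g u' + g v') := by
    intro r
    obtain ⟨u', v', hu', hv', hs⟩ := twoUnits (f r)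
    refine ⟨r - g (f r), u', v', ?_, hu', hv', ?_⟩
    · simp [RingHom.mem_ker, map_sub, hfg]
    · rw [← map_add, ← hs]; ring
  -- the two families of generators
  set Good : ℕ → Set (ExteriorAlgebra R (KaehlerDifferential ℤ R)) := fun m =>
    {y | ∃ (c : R) (as bs : List R), (c = 1 ∨ c ∈ RingHom.ker f) ∧
      (∀ a ∈ as, a ∈ RingHom.ker f) ∧ (∀ b ∈ bs, IsUnit b) ∧
      (c ∈ RingHom.ker f ∨ as ≠ []) ∧ as.length + bs.length = m ∧
      y = wedgeD R c (as ++ bs)} with hGood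
  set Qs : ℕ → Set (ExteriorAlgebra R (KaehlerDifferential ℤ R)) := fun m =>
    {y | ∃ (s : S) (us : List S), (∀ u ∈ us, IsUnit u) ∧ us.length = m ∧
      y = wedgeD R (g s) (us.map g)} with hQs
  -- the key multiplication step
  have step : ∀ (m : ℕ) (h : R),
      (h ∈ RingHom.ker f ∨ ∃ u' : S, IsUnit u' ∧ h = g u') →
      ∀ y ∈ AddSubgroup.closure (Good m ∪ Qs m),
        ι R (D ℤ R h) * y ∈ AddSubgroup.closure (Good (m+1) ∪ Qs (m+1)) := by
    intro m h hh y hy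
    have hle : AddSubgroup.closure (Good m ∪ Qs m) ≤
        AddSubgroup.comap (AddMonoidHom.mulLeft (ι R (D ℤ R h)))
          (AddSubgroup.closure (Good (m+1) ∪ Qs (m+1))) := by
      rw [AddSubgroup.closure_le]
      rintro y (⟨c, as, bs, hc, has, hbs, hne, hlen, rfl⟩ | ⟨s, us, hus, hlen, rfl⟩)
      · -- Good case
        show ι R (D ℤ R h) * wedgeD R c (as ++ bs) ∈
          AddSubgroup.closure (Good (m+1) ∪ Qs (m+1))
        rw [← wedgeD_cons]
        rcases hh with hI | ⟨u', hu', rfl⟩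
        · refine AddSubgroup.subset_closure (Or.inl ⟨c, h :: as, bs, hc, ?_, hbs,
            Or.inr (List.cons_ne_nil _ _), ?_, rfl⟩)
          · intro a ha
            rcases List.mem_cons.mp ha with rfl | ha'
            · exact hI
            · exact has a ha'
          · simp only [List.length_cons]
            omega
        · rw [wedgeD_move]
          have hmem : wedgeD R c (as ++ g u' :: bs) ∈
              AddSubgroup.closure (Good (m+1) ∪ Qs (m+1)) := by
            refine AddSubgroup.subset_closure
              (Or.inl ⟨c, as, g u' :: bs, hc, has, ?_, hne, ?_, rfl⟩)
            · intro b hb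
              rcases List.mem_cons.mp hb with rfl | hb'
              · exact liftUnit _ (by rw [hfg]; exact hu')
              · exact hbs b hb'
            · simp only [List.length_cons]
              omega
          exact AddSubgroup.zsmul_mem _ hmem _
      · -- Qs case
        show ι R (D ℤ R h) * wedgeD R (g s) (us.map g) ∈
          AddSubgroup.closure (Good (m+1) ∪ Qs (m+1))
        rw [← wedgeD_cons]
        rcases hh with hI | ⟨u', hu', rfl⟩
        · -- h ∈ I : use the coefficient trick
          obtain ⟨u', v', hu', hv', hs⟩ := twoUnits s
          have hgs : wedgeD R h (g s :: us.map g)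
              = wedgeD R h (g u' :: us.map g) + wedgeD R h (g v' :: us.map g) := by
            rw [show g s = g u' + g v' by rw [hs, map_add], wedgeD_cons_addD]
          rw [wedgeD_trick, hgs]
          have hbsall : ∀ b ∈ us.map g, IsUnit b := by
            intro b hb
            obtain ⟨u, hu, rfl⟩ := List.mem_map.mp hb
            exact liftUnit _ (by rw [hfg]; exact hus u hu)
          refine sub_mem ?_ (add_mem ?_ ?_)
          · refine AddSubgroup.subset_closure (Or.inl
              ⟨1, [g s * h], us.map g, Or.inl rfl, ?_, hbsall,
                Or.inr (List.cons_ne_nil _ _), ?_, rfl⟩)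
            · intro a ha
              rcases List.mem_singleton.mp ha with rfl
              simp [RingHom.mem_ker, map_mul, hfg, RingHom.mem_ker.mp hI]
            · simp only [List.length_cons, List.length_map, List.length_nil, hlen]
              omega
          · refine AddSubgroup.subset_closure (Or.inl
              ⟨h, [], g u' :: us.map g, Or.inr hI, by simp, ?_, Or.inl hI, ?_, rfl⟩)
            · intro b hb
              rcases List.mem_cons.mp hb with rfl | hb'
              · exact liftUnit _ (by rw [hfg]; exact hu')
              · exact hbsall b hb'
            · simp only [List.length_nil, List.length_cons, List.length_map, hlen]
              omega
          · refine AddSubgroup.subset_closure (Or.inl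
              ⟨h, [], g v' :: us.map g, Or.inr hI, by simp, ?_, Or.inl hI, ?_, rfl⟩)
            · intro b hb
              rcases List.mem_cons.mp hb with rfl | hb'
              · exact liftUnit _ (by rw [hfg]; exact hv')
              · exact hbsall b hb'
            · simp only [List.length_nil, List.length_cons, List.length_map, hlen]
              omega
        · -- h = g u'
          refine AddSubgroup.subset_closure (Or.inr ⟨s, u' :: us, ?_, by simp [hlen], ?_⟩)
          · intro u hu
            rcases List.mem_cons.mp hu with rfl | hu'
            · exact hu'
            · exact hus u hu'
          · rw [List.map_cons]
    exact hle hy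
  -- the key lemma
  have key : ∀ (rs : List R) (c : R),
      wedgeD R c rs ∈ AddSubgroup.closure (Good rs.length ∪ Qs rs.length) := by
    intro rs
    induction rs with
    | nil =>
      intro c
      rw [show wedgeD R c [] = wedgeD R (c - g (f c)) [] + wedgeD R (g (f c)) [] by
        rw [← wedgeD_add_coeff]; congr 1; ring]
      refine add_mem (AddSubgroup.subset_closure (Or.inl
        ⟨c - g (f c), [], [], Or.inr ?_, by simp, by simp, Or.inl ?_, rfl, rfl⟩))
        (AddSubgroup.subset_closure (Or.inr ⟨f c, [], by simp, rfl, rfl⟩))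
      · simp [RingHom.mem_ker, map_sub, hfg]
      · simp [RingHom.mem_ker, map_sub, hfg]
    | cons r rs ih =>
      intro c
      obtain ⟨i, u', v', hi, hu', hv', hr⟩ := decomp r
      have hlen : (r :: rs).length = rs.length + 1 := rfl
      rw [hr, wedgeD_cons_addD, wedgeD_cons_addD]
      refine add_mem ?_ (add_mem ?_ ?_) <;> rw [wedgeD_cons]
      · exact step rs.length i (Or.inl hi) _ (ih c)
      · exact step rs.length (g u') (Or.inr ⟨u', hu', rfl⟩) _ (ih c)
      · exact step rs.length (g v') (Or.inr ⟨v', hv', rfl⟩) _ (ih c)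
  -- x lies in the closure of the combined generating set
  have hx' : x ∈ AddSubgroup.closure (Good n ∪ Qs n) := by
    unfold omegaDeg at hx
    refine ((AddSubgroup.closure_le _).mpr ?_) hx
    rintro y ⟨c, rs, hlen, rfl⟩
    rw [← hlen]
    exact key rs c
  rw [AddSubgroup.closure_union] at hx'
  obtain ⟨p, hp, q, hq, hpq⟩ := AddSubgroup.mem_sup.mp hx'
  -- computation of Φ on wedges
  have Φwedge : ∀ (c : R) (rs : List R), Φ (wedgeD R c rs) = wedgeD S (f c) (rs.map f) := by
    intro c rs
    rw [wedgeD, Algebra.smul_def, map_mul, hΦ1, map_list_prod, wedgeD, Algebra.smul_def]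
    congr 1
    rw [List.map_map, List.map_map]
    exact congrArg List.prod (List.map_congr_left fun r _ => hΦ2 r)
  -- Φ kills the good generators
  have hΦGood : ∀ m, ∀ y ∈ Good m, Φ y = 0 := by
    rintro m y ⟨c, as, bs, hc, has, hbs, hne, hlen, rfl⟩
    rw [Φwedge]
    rcases hne with hcI | hane
    · rw [show f c = 0 from RingHom.mem_ker.mp hcI]
      simp [wedgeD]
    · rcases as with _ | ⟨a, as'⟩
      · exact absurd rfl hane
      · have ha : f a = 0 := RingHom.mem_ker.mp (has a List.mem_cons_self)
        simp [wedgeD, List.map_cons, ha]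
  have hΦp : Φ p = 0 := by
    have hle : AddSubgroup.closure (Good n) ≤ AddMonoidHom.ker Φ.toAddMonoidHom := by
      rw [AddSubgroup.closure_le]
      intro y hy
      exact AddMonoidHom.mem_ker.mpr (hΦGood n y hy)
    exact AddMonoidHom.mem_ker.mp (hle hp)
  have hΦq : Φ q = 0 := by
    have := congrArg Φ hpq
    rw [map_add, hΦp, hΦx, zero_add] at this
    exact this
  -- construct the section Ψ
  letI : Algebra S R := g.toAlgebra
  letI : IsScalarTower ℤ S R := IsScalarTower.of_algebraMap_eq' (Subsingleton.elim _ _)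
  letI : Algebra S (ExteriorAlgebra R (KaehlerDifferential ℤ R)) :=
    ((algebraMap R _).comp g).toAlgebra' (fun c x => Algebra.commutes (g c) x)
  have hsmul : ∀ (s : S) (w : Ω[R⁄ℤ]), s • w = g s • w := by
    intro s w
    conv_lhs => rw [show w = (1:R) • w from (one_smul R w).symm]
    rw [← smul_assoc, Algebra.smul_def s (1 : R), mul_one]
    rfl
  have hsmulA : ∀ (s : S) (w : ExteriorAlgebra R (KaehlerDifferential ℤ R)),
      s • w = g s • w := by
    intro s w
    rw [Algebra.smul_def (g s) w]
    rfl
  set L := KaehlerDifferential.map ℤ ℤ S R with hL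
  have hmap : ∀ s : S, L (D ℤ S s) = D ℤ R (g s) := by
    intro s
    rw [hL, KaehlerDifferential.map_D]
    rfl
  set φ : Ω[S⁄ℤ] →ₗ[S] ExteriorAlgebra R (KaehlerDifferential ℤ R) :=
    { toFun := fun w => ι R (L w)
      map_add' := by
        intro w w'
        show ι R (L (w + w')) = ι R (L w) + ι R (L w')
        rw [map_add, map_add]
      map_smul' := by
        intro s w
        show ι R (L (s • w)) = s • ι R (L w)
        rw [map_smul, hsmul, map_smul, hsmulA] } with hφ
  have hφsq : ∀ w, φ w * φ w = 0 := fun w => ι_sq_zero (L w)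
  set Ψa := ExteriorAlgebra.lift S ⟨φ, hφsq⟩ with hΨa
  have hlist : ∀ us : List S, Ψa ((us.map fun r => ι S (D ℤ S r)).prod)
      = ((us.map g).map fun r => ι R (D ℤ R r)).prod := by
    intro us
    rw [map_list_prod, List.map_map, List.map_map]
    refine congrArg List.prod (List.map_congr_left fun r _ => ?_)
    show Ψa (ι S (D ℤ S r)) = ι R (D ℤ R (g r))
    rw [hΨa, ExteriorAlgebra.lift_ι_apply]
    exact congrArg (ι R) (hmap r)
  have hΨ : ∀ (s : S) (us : List S), Ψa (wedgeD S s us) = wedgeD R (g s) (us.map g) := by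
    intro s us
    rw [wedgeD, Algebra.smul_def, map_mul, Ψa.commutes, hlist]
    rw [wedgeD, Algebra.smul_def]
    congr 1
  -- Ψ ∘ Φ fixes the Qs generators
  have hQfix : ∀ y ∈ Qs n, Ψa (Φ y) = y := by
    rintro y ⟨s, us, hus, hlen, rfl⟩
    rw [Φwedge, hfg]
    have : (us.map g).map f = us := by
      rw [List.map_map]
      have : List.map (f ∘ g) us = List.map id us :=
        List.map_congr_left fun u _ => hfg u
      rw [this, List.map_id]
    rw [this, hΨ]
  have hq0 : q = 0 := by
    have hle : AddSubgroup.closure (Qs n) ≤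
        AddMonoidHom.eqLocus (Ψa.toRingHom.toAddMonoidHom.comp Φ.toAddMonoidHom) (AddMonoidHom.id _) := by
      rw [AddSubgroup.closure_le]
      intro y hy
      exact hQfix y hy
    have h1 : Ψa (Φ q) = q := hle hq
    rw [hΦq, map_zero] at h1
    exact h1.symm
  rw [← hpq, hq0, add_zero]
  refine AddSubgroup.closure_mono ?_ hp
  rintro y ⟨c, as, bs, hc, has, hbs, _, hlen, rfl⟩
  exact ⟨c, as, bs, hc, has, hbs, hlen, rfl⟩
end

section
/- Let R be a split nilpotent extension of a 2-fold stable ring S with extension ideal I, 2 invertible in S. Then d Ω^{n−1}_{R,I} = d Ω^{n−1}_{R/Z} ∩ Ω^n_{R,I}, and consequently the natural map Ω^n_{R,I}/d Ω^{n−1}_{R,I} → Ω^n_{R/Z}/d Ω^{n−1}_{R/Z} is injective. -/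
lemma exists_psi {R S : Type*} [CommRing R] [CommRing S] (g : S →+* R) :
    ∃ Ψ : ExteriorAlgebra S (KaehlerDifferential ℤ S) →+*
        ExteriorAlgebra R (KaehlerDifferential ℤ R),
      ∀ (c : S) (ss : List S), Ψ (wedgeD S c ss) = wedgeD R (g c) (ss.map g) := by
  letI : Algebra S R := g.toAlgebra
  haveI : IsScalarTower ℤ S R := IsScalarTower.of_algebraMap_eq fun x => by
    simp [Algebra.algebraMap_eq_smul_one]
  let m : KaehlerDifferential ℤ S →ₗ[S] KaehlerDifferential ℤ R :=
    KaehlerDifferential.map ℤ ℤ S R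
  letI : Algebra S (ExteriorAlgebra R (KaehlerDifferential ℤ R)) :=
    RingHom.toAlgebra' ((algebraMap R _).comp g)
      (fun s x => Algebra.commutes (g s) x)
  haveI : IsScalarTower S R (ExteriorAlgebra R (KaehlerDifferential ℤ R)) :=
    IsScalarTower.of_algebraMap_eq fun x => rfl
  let L : KaehlerDifferential ℤ S →ₗ[S] ExteriorAlgebra R (KaehlerDifferential ℤ R) :=
    { toFun := fun x => ExteriorAlgebra.ι R (m x)
      map_add' := fun x y => by simp
      map_smul' := fun s x => by
        rw [m.map_smul, ← algebraMap_smul R s (m x), LinearMap.map_smul]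
        rfl }
  have hL : ∀ x, L x * L x = 0 := fun x => ExteriorAlgebra.ι_sq_zero _
  refine ⟨(ExteriorAlgebra.lift S ⟨L, hL⟩).toRingHom, fun c ss => ?_⟩
  have key : ∀ s : S, (ExteriorAlgebra.lift S ⟨L, hL⟩)
      (ExteriorAlgebra.ι S (KaehlerDifferential.D ℤ S s)) =
      ExteriorAlgebra.ι R (KaehlerDifferential.D ℤ R (g s)) := by
    intro s
    rw [ExteriorAlgebra.lift_ι_apply]
    show ExteriorAlgebra.ι R (m (KaehlerDifferential.D ℤ S s)) = _
    rw [show m (KaehlerDifferential.D ℤ S s)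
        = KaehlerDifferential.D ℤ R (algebraMap S R s) from KaehlerDifferential.map_D ℤ ℤ S R s]
    rfl
  show (ExteriorAlgebra.lift S ⟨L, hL⟩) (wedgeD S c ss) = _
  rw [wedgeD, Algebra.smul_def, map_mul, AlgHom.commutes, map_list_prod]
  rw [show algebraMap S (ExteriorAlgebra R (KaehlerDifferential ℤ R)) c
      = algebraMap R _ (g c) from rfl]
  rw [wedgeD, Algebra.smul_def]
  congr 1
  rw [List.map_map, List.map_map]
  congr 1
  exact List.map_congr_left fun s _ => key s


/-- `d Ω^n_{R,I} = d Ω^n_{R/ℤ} ∩ Ω^{n+1}_{R,I}` for a split nilpotent extension `R` of a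
`2`-fold stable ring `S` with `2` invertible.  Here `Φ` is the induced ring map
`Ω^•_{R/ℤ} → Ω^•_{S/ℤ}` (so `Ω^m_{R,I} := Ω^m_{R/ℤ} ∩ Ker Φ`), and `d`, `dS` are the
exterior derivatives of the algebraic de Rham complexes of `R` and `S`, characterized by
`d (c · dr_1 ∧ ⋯ ∧ dr_m) = dc ∧ dr_1 ∧ ⋯ ∧ dr_m` and commuting with `Φ`.  Consequently
the natural map `Ω^{n+1}_{R,I}/dΩ^n_{R,I} → Ω^{n+1}_{R/ℤ}/dΩ^n_{R/ℤ}` is injective. -/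
theorem stmt_14 {R S : Type*} [CommRing R] [CommRing S] (f : R →+* S) (g : S →+* R)
    (hf : Function.Surjective f) (hsplit : f.comp g = RingHom.id S)
    (N : ℕ) (hN : 1 ≤ N) (hnil : (RingHom.ker f) ^ N = ⊥)
    (hstable : ∀ a b : Fin 2 → S, (∀ j, Ideal.span {a j, b j} = ⊤) →
      ∃ t : S, ∀ j, IsUnit (a j + b j * t))
    (h2 : IsUnit (2 : S))
    (Φ : ExteriorAlgebra R (KaehlerDifferential ℤ R) →+*
      ExteriorAlgebra S (KaehlerDifferential ℤ S))
    (hΦ1 : ∀ r : R, Φ (algebraMap R _ r) = algebraMap S _ (f r))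
    (hΦ2 : ∀ r : R, Φ (ExteriorAlgebra.ι R (KaehlerDifferential.D ℤ R r)) =
      ExteriorAlgebra.ι S (KaehlerDifferential.D ℤ S (f r)))
    (d : ExteriorAlgebra R (KaehlerDifferential ℤ R) →+
      ExteriorAlgebra R (KaehlerDifferential ℤ R))
    (hd : ∀ (c : R) (rs : List R), d (wedgeD R c rs) = wedgeD R 1 (c :: rs))
    (dS : ExteriorAlgebra S (KaehlerDifferential ℤ S) →+
      ExteriorAlgebra S (KaehlerDifferential ℤ S))
    (hdS : ∀ (c : S) (rs : List S), dS (wedgeD S c rs) = wedgeD S 1 (c :: rs))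
    (hcomm : ∀ x, Φ (d x) = dS (Φ x))
    (n : ℕ) :
    AddSubgroup.map d (omegaDeg R n ⊓ AddMonoidHom.ker Φ.toAddMonoidHom) =
      AddSubgroup.map d (omegaDeg R n) ⊓
        (omegaDeg R (n + 1) ⊓ AddMonoidHom.ker Φ.toAddMonoidHom) ∧
    ∀ x ∈ omegaDeg R (n + 1) ⊓ AddMonoidHom.ker Φ.toAddMonoidHom,
      x ∈ AddSubgroup.map d (omegaDeg R n) →
      x ∈ AddSubgroup.map d (omegaDeg R n ⊓ AddMonoidHom.ker Φ.toAddMonoidHom) := by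
  obtain ⟨Ψ, hΨ⟩ := exists_psi (R := R) (S := S) g
  have hfg : ∀ s : S, f (g s) = s := fun s => RingHom.congr_fun hsplit s
  -- Φ on generators
  have hΦw : ∀ (c : R) (rs : List R), Φ (wedgeD R c rs) = wedgeD S (f c) (rs.map f) := by
    intro c rs
    rw [wedgeD, Algebra.smul_def, map_mul, hΦ1, map_list_prod, wedgeD, Algebra.smul_def]
    congr 1
    rw [List.map_map, List.map_map]
    exact congrArg List.prod (List.map_congr_left fun r _ => hΦ2 r)
  -- d maps omegaDeg n into omegaDeg (n+1)
  have hd_mem : ∀ x ∈ omegaDeg R n, d x ∈ omegaDeg R (n + 1) := by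
    intro x hx
    refine AddSubgroup.closure_induction ?_ ?_ ?_ ?_ hx
    · rintro y ⟨c, rs, hlen, rfl⟩
      rw [hd]
      exact AddSubgroup.subset_closure ⟨1, c :: rs, by simp [hlen], rfl⟩
    · rw [map_zero]; exact zero_mem _
    · intro a b _ _ ha hb; rw [map_add]; exact add_mem ha hb
    · intro a _ ha; rw [map_neg]; exact neg_mem ha
  -- Φ maps omegaDeg R m into omegaDeg S m
  have hΦ_mem : ∀ m, ∀ x ∈ omegaDeg R m, Φ x ∈ omegaDeg S m := by
    intro m x hx
    refine AddSubgroup.closure_induction ?_ ?_ ?_ ?_ hx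
    · rintro y ⟨c, rs, hlen, rfl⟩
      rw [hΦw]
      exact AddSubgroup.subset_closure ⟨f c, rs.map f, by simp [hlen], rfl⟩
    · rw [map_zero]; exact zero_mem _
    · intro a b _ _ ha hb; rw [map_add]; exact add_mem ha hb
    · intro a _ ha; rw [map_neg]; exact neg_mem ha
  -- Ψ maps omegaDeg S m into omegaDeg R m
  have hΨ_mem : ∀ m, ∀ y ∈ omegaDeg S m, Ψ y ∈ omegaDeg R m := by
    intro m y hy
    refine AddSubgroup.closure_induction ?_ ?_ ?_ ?_ hy
    · rintro z ⟨c, ss, hlen, rfl⟩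
      rw [hΨ]
      exact AddSubgroup.subset_closure ⟨g c, ss.map g, by simp [hlen], rfl⟩
    · rw [map_zero]; exact zero_mem _
    · intro a b _ _ ha hb; rw [map_add]; exact add_mem ha hb
    · intro a _ ha; rw [map_neg]; exact neg_mem ha
  -- Φ ∘ Ψ = id on omegaDeg S m
  have hΦΨ : ∀ m, ∀ y ∈ omegaDeg S m, Φ (Ψ y) = y := by
    intro m y hy
    refine AddSubgroup.closure_induction ?_ ?_ ?_ ?_ hy
    · rintro z ⟨c, ss, hlen, rfl⟩
      rw [hΨ, hΦw, hfg, List.map_map]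
      congr 1
      rw [show (⇑f ∘ ⇑g) = id from funext fun s => hfg s, List.map_id]
    · simp
    · intro a b _ _ ha hb; rw [map_add, map_add, ha, hb]
    · intro a _ ha; rw [map_neg, map_neg, ha]
  -- d ∘ Ψ = Ψ ∘ dS on omegaDeg S m
  have hdΨ : ∀ m, ∀ y ∈ omegaDeg S m, d (Ψ y) = Ψ (dS y) := by
    intro m y hy
    refine AddSubgroup.closure_induction ?_ ?_ ?_ ?_ hy
    · rintro z ⟨c, ss, hlen, rfl⟩
      rw [hΨ, hd, hdS, hΨ]
      simp [map_one]
    · simp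
    · intro a b _ _ ha hb; simp only [map_add]; rw [ha, hb]
    · intro a _ ha; simp only [map_neg]; rw [ha]
  have main : AddSubgroup.map d (omegaDeg R n ⊓ AddMonoidHom.ker Φ.toAddMonoidHom) =
      AddSubgroup.map d (omegaDeg R n) ⊓
        (omegaDeg R (n + 1) ⊓ AddMonoidHom.ker Φ.toAddMonoidHom) := by
    apply le_antisymm
    · rintro x ⟨w, hw, rfl⟩
      rw [SetLike.mem_coe, AddSubgroup.mem_inf] at hw
      obtain ⟨hw1, hw2⟩ := hw
      have hw2' : Φ w = 0 := hw2
      refine AddSubgroup.mem_inf.mpr ⟨⟨w, hw1, rfl⟩, AddSubgroup.mem_inf.mpr ⟨hd_mem w hw1, ?_⟩⟩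
      show Φ (d w) = 0
      rw [hcomm, hw2', map_zero]
    · rintro x hx
      rw [AddSubgroup.mem_inf] at hx
      obtain ⟨⟨ω, hω, rfl⟩, hx2⟩ := hx
      rw [AddSubgroup.mem_inf] at hx2
      have hker : Φ (d ω) = 0 := hx2.2
      refine ⟨ω - Ψ (Φ ω), AddSubgroup.mem_inf.mpr ⟨?_, ?_⟩, ?_⟩
      · exact sub_mem hω (hΨ_mem n _ (hΦ_mem n ω hω))
      · show Φ (ω - Ψ (Φ ω)) = 0
        rw [map_sub, hΦΨ n _ (hΦ_mem n ω hω), sub_self]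
      · rw [map_sub, hdΨ n _ (hΦ_mem n ω hω), ← hcomm, hker, map_zero, sub_zero]
  refine ⟨main, fun x hx hmap => ?_⟩
  rw [main]
  exact AddSubgroup.mem_inf.mpr ⟨hmap, hx⟩
end
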